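/- arXiv:1605.06288 — 2 statements merged into one kernel-verified Lean document; each statement's English description precedes it below -/
import Mathlib

section
/- Let x, u : ℝ² → ℝ³ and let θ be a point at which x and u are twice differentiable. Write a_α = ∂x/∂θ^α(θ), u,_α = ∂u/∂θ^α(θ), a_{α,β} = ∂²x/∂θ^α∂θ^β(θ), u,_{αβ} = ∂²u/∂θ^α∂θ^β(θ), and assume a₁ × a₂ ≠ 0; set a₃ = (a₁ × a₂)/‖a₁ × a₂‖. For ε ∈ ℝ let x_ε = x + ε u and define the second-fundamental-form coefficient of the deformed surface b_{αβ}(ε) = [ (∂₁x_ε × ∂₂x_ε)/‖∂₁x_ε × ∂₂x_ε‖ ] · ∂²x_ε/∂θ^α∂θ^β, evaluated at θ. Then ε ↦ b_{αβ}(ε) is differentiable at ε = 0 and its derivative equals −β_{αβ}, where β_{αβ} = − u,_{αβ}·a₃ + (1/‖a₁×a₂‖) [ u,₁·(a_{α,β} × a₂) + u,₂·(a₁ × a_{α,β}) ] + (a₃·a_{α,β}/‖a₁×a₂‖) [ u,₁·(a₂ × a₃) + u,₂·(a₃ × a₁) ] is the linearised bending strain of the Kirchhoff-Love shell model. -/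
/-!
Since differentiation commutes with `x ↦ x + ε • u`, `b(ε) = ν(ε) ⬝ᵥ m(ε)`, where
`m(ε) = a_{αβ} + ε u_{αβ}` and `ν(ε)` is the unit vector along
`n(ε) = (a₁ + ε u₁) × (a₂ + ε u₂)`. Differentiating a unit vector `‖n‖⁻¹ n` keeps only the part of
`n' / ‖n‖` orthogonal to it, so with `n'(0) = u₁ × a₂ + a₁ × u₂` the product rule gives
`b'(0) = ‖n‖⁻¹ (n' ⬝ᵥ a_{αβ} - (a₃ ⬝ᵥ n') (a₃ ⬝ᵥ a_{αβ})) + a₃ ⬝ᵥ u_{αβ}`, and cyclic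
permutations of the triple products turn this into `-β_{αβ}`.
-/

open Matrix

/-- The Euclidean norm of a vector in `ℝ³` (represented as `Fin 3 → ℝ`). -/
noncomputable def euclNorm3 (v : Fin 3 → ℝ) : ℝ :=
  ‖(EuclideanSpace.equiv (Fin 3) ℝ).symm v‖

section CurveCalculus

variable {𝕜 : Type*} [NontriviallyNormedField 𝕜] {t : 𝕜}

theorem HasDerivAt.dotProduct {ι : Type*} [Fintype ι] {f g : 𝕜 → ι → 𝕜} {f' g' : ι → 𝕜}
    (hf : HasDerivAt f f' t) (hg : HasDerivAt g g' t) :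
    HasDerivAt (fun s => f s ⬝ᵥ g s) (f' ⬝ᵥ g t + f t ⬝ᵥ g') t := by
  have h := HasDerivAt.fun_sum (u := Finset.univ)
    fun i _ => (hasDerivAt_pi.mp hf i).fun_mul (hasDerivAt_pi.mp hg i)
  simpa only [_root_.dotProduct, Finset.sum_add_distrib] using h

theorem HasDerivAt.cross {f g : 𝕜 → Fin 3 → 𝕜} {f' g' : Fin 3 → 𝕜}
    (hf : HasDerivAt f f' t) (hg : HasDerivAt g g' t) :
    HasDerivAt (fun s => f s ⨯₃ g s) (f' ⨯₃ g t + f t ⨯₃ g') t := by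
  have hc (i j : Fin 3) := (hasDerivAt_pi.mp hf i).fun_mul (hasDerivAt_pi.mp hg j)
  refine hasDerivAt_pi.mpr fun k => ?_
  fin_cases k <;> simp only [cross_apply] <;>
    [convert (hc 1 2).fun_sub (hc 2 1) using 1; convert (hc 2 0).fun_sub (hc 0 2) using 1;
      convert (hc 0 1).fun_sub (hc 1 0) using 1] <;> simp <;> ring

theorem hasDerivAt_add_smul {F : Type*} [NormedAddCommGroup F] [NormedSpace 𝕜 F] (v w : F)
    (t : 𝕜) :
    HasDerivAt (fun s : 𝕜 => v + s • w) w t := by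
  simpa using ((hasDerivAt_id t).smul_const w).const_add v

end CurveCalculus

theorem euclNorm3_eq_sqrt (v : Fin 3 → ℝ) : euclNorm3 v = √(v ⬝ᵥ v) := by
  simp [euclNorm3, EuclideanSpace.norm_eq, dotProduct, sq]

theorem euclNorm3_pos {v : Fin 3 → ℝ} (hv : v ≠ 0) : 0 < euclNorm3 v := by
  simpa [euclNorm3] using hv

theorem HasDerivAt.euclNorm3_inv_smul {n : ℝ → Fin 3 → ℝ} {n' : Fin 3 → ℝ} {t : ℝ}
    (hn : HasDerivAt n n' t) (h0 : n t ≠ 0) :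
    HasDerivAt (fun s => (euclNorm3 (n s))⁻¹ • n s)
      ((euclNorm3 (n t))⁻¹ • (n' - (((euclNorm3 (n t))⁻¹ • n t) ⬝ᵥ n') •
        ((euclNorm3 (n t))⁻¹ • n t))) t := by
  have hN : 0 < euclNorm3 (n t) := euclNorm3_pos h0
  have hnorm : HasDerivAt (fun s => euclNorm3 (n s)) ((n t ⬝ᵥ n') / euclNorm3 (n t)) t := by
    rw [euclNorm3_eq_sqrt] at hN
    simp only [euclNorm3_eq_sqrt]
    convert (hn.dotProduct hn).sqrt (Real.sqrt_pos.mp hN).ne' using 1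
    rw [dotProduct_comm n']
    ring
  refine ((hnorm.fun_inv hN.ne').fun_smul hn).congr_deriv ?_
  rw [smul_dotProduct]
  module

section LinearVariation

variable {𝕜 : Type*} [NontriviallyNormedField 𝕜]
  {E : Type*} [NormedAddCommGroup E] [NormedSpace 𝕜 E]
  {F : Type*} [NormedAddCommGroup F] [NormedSpace 𝕜 F] {x u : E → F} {θ : E}

theorem fderiv_add_smul_apply (hx : DifferentiableAt 𝕜 x θ) (hu : DifferentiableAt 𝕜 u θ)
    (ε : 𝕜) (v : E) :
    fderiv 𝕜 (fun p => x p + ε • u p) θ v = fderiv 𝕜 x θ v + ε • fderiv 𝕜 u θ v := by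
  rw [fderiv_fun_add (g := fun q => ε • u q) hx (hu.const_smul ε), fderiv_fun_const_smul hu ε]
  rfl

theorem fderiv_fderiv_add_smul_apply (hx : ContDiffAt 𝕜 2 x θ) (hu : ContDiffAt 𝕜 2 u θ)
    (ε : 𝕜) (v w : E) :
    fderiv 𝕜 (fun p => fderiv 𝕜 (fun q => x q + ε • u q) p v) θ w =
      fderiv 𝕜 (fun p => fderiv 𝕜 x p v) θ w + ε • fderiv 𝕜 (fun p => fderiv 𝕜 u p v) θ w := by
  have hfirst : (fun p => fderiv 𝕜 (fun q => x q + ε • u q) p v)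
      =ᶠ[nhds θ] fun p => fderiv 𝕜 x p v + ε • fderiv 𝕜 u p v := by
    filter_upwards [hx.eventually (by simp), hu.eventually (by simp)] with p hxp hup
    exact fderiv_add_smul_apply (hxp.differentiableAt (by simp)) (hup.differentiableAt (by simp))
      ε v
  have hdiff {y : E → F} (hy : ContDiffAt 𝕜 2 y θ) :
      DifferentiableAt 𝕜 (fun p => fderiv 𝕜 y p v) θ :=
    ((hy.fderiv_right (m := 1) le_rfl).differentiableAt one_ne_zero).clm_apply
      (differentiableAt_const v)
  rw [hfirst.fderiv_eq, fderiv_add_smul_apply (hdiff hx) (hdiff hu)]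

end LinearVariation

theorem neg_bendingStrain_eq_unitNormal_variation (a₁ a₂ u₁ u₂ aαβ uαβ a₃ : Fin 3 → ℝ) (N : ℝ) :
    -(-(uαβ ⬝ᵥ a₃) + N⁻¹ * (u₁ ⬝ᵥ (aαβ ⨯₃ a₂) + u₂ ⬝ᵥ (a₁ ⨯₃ aαβ)) +
        (a₃ ⬝ᵥ aαβ / N) * (u₁ ⬝ᵥ (a₂ ⨯₃ a₃) + u₂ ⬝ᵥ (a₃ ⨯₃ a₁))) =
      (N⁻¹ • ((u₁ ⨯₃ a₂ + a₁ ⨯₃ u₂) - (a₃ ⬝ᵥ (u₁ ⨯₃ a₂ + a₁ ⨯₃ u₂)) • a₃)) ⬝ᵥ aαβ +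
        a₃ ⬝ᵥ uαβ := by
  have h₁ : (u₁ ⨯₃ a₂) ⬝ᵥ aαβ = -(u₁ ⬝ᵥ (aαβ ⨯₃ a₂)) := by
    rw [dotProduct_comm, triple_product_permutation, ← cross_anticomm, dotProduct_neg]
  have h₂ : (a₁ ⨯₃ u₂) ⬝ᵥ aαβ = -(u₂ ⬝ᵥ (a₁ ⨯₃ aαβ)) := by
    rw [dotProduct_comm, triple_product_permutation, triple_product_permutation,
      ← cross_anticomm, dotProduct_neg]
  have h₃ : a₃ ⬝ᵥ (u₁ ⨯₃ a₂) = u₁ ⬝ᵥ (a₂ ⨯₃ a₃) := triple_product_permutation a₃ u₁ a₂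
  have h₄ : a₃ ⬝ᵥ (a₁ ⨯₃ u₂) = u₂ ⬝ᵥ (a₃ ⨯₃ a₁) := by
    rw [triple_product_permutation, triple_product_permutation]
  simp only [smul_dotProduct, sub_dotProduct, add_dotProduct, dotProduct_add, smul_eq_mul,
    h₁, h₂, h₃, h₄, dotProduct_comm uαβ a₃]
  ring

/-- **Linearised bending strain of the Kirchhoff–Love shell model.**
Let `x u : ℝ² → ℝ³` be twice differentiable at `θ`, with covariant base vectors
`a_α = ∂x/∂θ^α`, displacement derivatives `u,_α`, second derivatives `a_{α,β}`, `u,_{αβ}`,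
`a₁ × a₂ ≠ 0` and unit normal `a₃ = (a₁ × a₂)/‖a₁ × a₂‖`.  For `ε ∈ ℝ` let `x_ε = x + ε u`
and let `b(ε)` be the second-fundamental-form coefficient of the deformed surface
`b_{αβ}(ε) = [(∂₁x_ε × ∂₂x_ε)/‖∂₁x_ε × ∂₂x_ε‖] · ∂²x_ε/∂θ^α∂θ^β` at `θ`.  Then
`ε ↦ b(ε)` is differentiable at `ε = 0` with derivative `−β_{αβ}`, where `β_{αβ}` is the
linearised bending strain
`β_{αβ} = −u,_{αβ}·a₃ + (1/‖a₁×a₂‖)[u,₁·(a_{α,β}×a₂) + u,₂·(a₁×a_{α,β})]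
          + (a₃·a_{α,β}/‖a₁×a₂‖)[u,₁·(a₂×a₃) + u,₂·(a₃×a₁)]`. -/
theorem bending_strain_is_linearised_second_fundamental_form
    (x u : (Fin 2 → ℝ) → (Fin 3 → ℝ)) (θ : Fin 2 → ℝ)
    (hx : ContDiffAt ℝ 2 x θ) (hu : ContDiffAt ℝ 2 u θ)
    (α β : Fin 2)
    (a₁ a₂ u₁ u₂ aαβ uαβ a₃ : Fin 3 → ℝ)
    (ha₁ : a₁ = fderiv ℝ x θ (Pi.single (0 : Fin 2) (1 : ℝ)))
    (ha₂ : a₂ = fderiv ℝ x θ (Pi.single (1 : Fin 2) (1 : ℝ)))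
    (hu₁ : u₁ = fderiv ℝ u θ (Pi.single (0 : Fin 2) (1 : ℝ)))
    (hu₂ : u₂ = fderiv ℝ u θ (Pi.single (1 : Fin 2) (1 : ℝ)))
    (haαβ : aαβ =
      fderiv ℝ (fun p => fderiv ℝ x p (Pi.single α (1 : ℝ))) θ (Pi.single β (1 : ℝ)))
    (huαβ : uαβ =
      fderiv ℝ (fun p => fderiv ℝ u p (Pi.single α (1 : ℝ))) θ (Pi.single β (1 : ℝ)))
    (hcross : a₁ ⨯₃ a₂ ≠ 0)
    (ha₃ : a₃ = (euclNorm3 (a₁ ⨯₃ a₂))⁻¹ • (a₁ ⨯₃ a₂))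
    (b : ℝ → ℝ)
    (hb : ∀ ε : ℝ, b ε =
      ((euclNorm3 ((fderiv ℝ (fun p => x p + ε • u p) θ (Pi.single (0 : Fin 2) (1 : ℝ))) ⨯₃
            (fderiv ℝ (fun p => x p + ε • u p) θ (Pi.single (1 : Fin 2) (1 : ℝ)))))⁻¹ •
          ((fderiv ℝ (fun p => x p + ε • u p) θ (Pi.single (0 : Fin 2) (1 : ℝ))) ⨯₃
            (fderiv ℝ (fun p => x p + ε • u p) θ (Pi.single (1 : Fin 2) (1 : ℝ))))) ⬝ᵥ
        fderiv ℝ (fun p => fderiv ℝ (fun q => x q + ε • u q) p (Pi.single α (1 : ℝ))) θ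
          (Pi.single β (1 : ℝ))) :
    HasDerivAt b
      (-(-(uαβ ⬝ᵥ a₃) +
          (euclNorm3 (a₁ ⨯₃ a₂))⁻¹ * (u₁ ⬝ᵥ (aαβ ⨯₃ a₂) + u₂ ⬝ᵥ (a₁ ⨯₃ aαβ)) +
          (a₃ ⬝ᵥ aαβ / euclNorm3 (a₁ ⨯₃ a₂)) * (u₁ ⬝ᵥ (a₂ ⨯₃ a₃) + u₂ ⬝ᵥ (a₃ ⨯₃ a₁))))
      0 := by
  have hxθ : DifferentiableAt ℝ x θ := hx.differentiableAt (by simp)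
  have huθ : DifferentiableAt ℝ u θ := hu.differentiableAt (by simp)
  have hb_eq : b = fun ε => ((euclNorm3 ((a₁ + ε • u₁) ⨯₃ (a₂ + ε • u₂)))⁻¹ •
      ((a₁ + ε • u₁) ⨯₃ (a₂ + ε • u₂))) ⬝ᵥ (aαβ + ε • uαβ) := by
    funext ε
    rw [hb, fderiv_add_smul_apply hxθ huθ, fderiv_add_smul_apply hxθ huθ,
      fderiv_fderiv_add_smul_apply hx hu, ha₁, ha₂, hu₁, hu₂, haαβ, huαβ]
  have hnormal : HasDerivAt (fun ε : ℝ => (a₁ + ε • u₁) ⨯₃ (a₂ + ε • u₂))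
      (u₁ ⨯₃ a₂ + a₁ ⨯₃ u₂) 0 := by
    simpa using (hasDerivAt_add_smul a₁ u₁ 0).cross (hasDerivAt_add_smul a₂ u₂ 0)
  have hunit := hnormal.euclNorm3_inv_smul (by simpa using hcross)
  rw [hb_eq, neg_bendingStrain_eq_unitNormal_variation]
  simpa [ha₃] using hunit.dotProduct (hasDerivAt_add_smul aαβ uαβ 0)
end

section
/- Let A = (a^{αβ}) be a symmetric positive-definite real 2×2 matrix and let ν ∈ ℝ with −1 < ν < 1. Define H^{αβγδ} = ν a^{αβ} a^{γδ} + (1/2)(1 − ν)(a^{αγ} a^{βδ} + a^{αδ} a^{βγ}). Then for every symmetric real 2×2 matrix m = (m_{αβ}), the contraction Σ_{α,β,γ,δ} H^{αβγδ} m_{αβ} m_{γδ} is nonnegative, and it is zero if and only if m = 0. Consequently the membrane and bending energy densities W^m(α) = (1/2)(E t/(1−ν²)) α : H : α and W^b(β) = (1/2)(E t³/(12(1−ν²))) β : H : β are strictly positive on nonzero symmetric strain tensors whenever E > 0 and t > 0. -/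
/-!
Write `A = Bᵀ B` with `B` invertible. For symmetric `A` and `m` the contraction `m : H : m`
equals `ν (tr (A m))² + (1 - ν) tr ((A m)²)`, and by cyclicity of the trace this does not change
when `A m = Bᵀ (B m)` is replaced by the symmetric matrix `C = B m Bᵀ`, which is nonzero when `m`
is. Since `tr (C²) = ‖C‖²` and `(tr C)² ≤ n ‖C‖²`, the form is at least
`min (1 - ν) (1 + (n - 1) ν) ‖C‖² > 0`; in dimension two this is the condition `-1 < ν < 1`.
-/

open Matrix

namespace Matrix

variable {n k : Type*} [Fintype n] [Fintype k]

def isotropicForm (ν : ℝ) (X : Matrix n n ℝ) : ℝ :=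
  ν * X.trace ^ 2 + (1 - ν) * (X * X).trace

lemma isotropicForm_mul_comm (ν : ℝ) (X : Matrix n k ℝ) (Y : Matrix k n ℝ) :
    isotropicForm ν (X * Y) = isotropicForm ν (Y * X) := by
  rw [isotropicForm, isotropicForm, trace_mul_comm X Y, Matrix.mul_assoc, trace_mul_comm X]
  simp only [Matrix.mul_assoc]

lemma IsSymm.trace_mul_self {C : Matrix n n ℝ} (hC : C.IsSymm) :
    (C * C).trace = ∑ i, ∑ j, C i j ^ 2 := by
  simp only [trace, diag_apply, mul_apply, sq, hC.apply]

lemma IsSymm.trace_sq_le_card_mul_trace_mul_self {C : Matrix n n ℝ} (hC : C.IsSymm) :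
    C.trace ^ 2 ≤ Fintype.card n * (C * C).trace := by
  have hdiag : ∑ i, C i i ^ 2 ≤ ∑ i, ∑ j, C i j ^ 2 :=
    Finset.sum_le_sum fun i _ =>
      Finset.single_le_sum (f := fun j => C i j ^ 2) (fun j _ => sq_nonneg _) (Finset.mem_univ i)
  calc C.trace ^ 2 ≤ Fintype.card n * ∑ i, C i i ^ 2 := sq_sum_le_card_mul_sum_sq
    _ ≤ Fintype.card n * (C * C).trace := by
      rw [hC.trace_mul_self]; gcongr

lemma IsSymm.trace_mul_self_pos {C : Matrix n n ℝ} (hC : C.IsSymm) (hC0 : C ≠ 0) :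
    0 < (C * C).trace := by
  obtain ⟨i, j, hij⟩ : ∃ i j, C i j ≠ 0 := by
    by_contra! h; exact hC0 (Matrix.ext h)
  rw [hC.trace_mul_self]
  exact Finset.sum_pos' (fun _ _ => Finset.sum_nonneg fun _ _ => sq_nonneg _)
    ⟨i, Finset.mem_univ _, Finset.sum_pos' (fun _ _ => sq_nonneg _)
      ⟨j, Finset.mem_univ _, by positivity⟩⟩

lemma IsSymm.isotropicForm_pos {ν : ℝ} (hν₁ : 0 < 1 + (Fintype.card n - 1) * ν) (hν₂ : ν < 1)
    {C : Matrix n n ℝ} (hC : C.IsSymm) (hC0 : C ≠ 0) : 0 < isotropicForm ν C := by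
  have hT := hC.trace_sq_le_card_mul_trace_mul_self
  have hS := hC.trace_mul_self_pos hC0
  unfold isotropicForm
  rcases le_or_gt 0 ν with hν | hν
  · nlinarith [sq_nonneg C.trace]
  · nlinarith

lemma PosDef.isotropicForm_mul_pos [DecidableEq n] {A m : Matrix n n ℝ} (hA : A.PosDef)
    (hm : m.IsSymm) (hm0 : m ≠ 0) {ν : ℝ} (hν₁ : 0 < 1 + (Fintype.card n - 1) * ν)
    (hν₂ : ν < 1) : 0 < isotropicForm ν (A * m) := by
  open scoped MatrixOrder in
  obtain ⟨B, hB, rfl⟩ :=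
    CStarAlgebra.isStrictlyPositive_iff_eq_star_mul_self.mp hA.isStrictlyPositive
  have hC : (B * m * Bᵀ).IsSymm := by
    simp [IsSymm, transpose_mul, hm.eq, Matrix.mul_assoc]
  have hC0 : B * m * Bᵀ ≠ 0 := fun h =>
    hm0 <| hB.mul_left_cancel <| ((isUnit_transpose B).mpr hB).mul_right_cancel <| by simpa using h
  rw [star_eq_conjTranspose, conjTranspose_eq_transpose_of_trivial, Matrix.mul_assoc,
    isotropicForm_mul_comm]
  exact hC.isotropicForm_pos hν₁ hν₂ hC0

end Matrix

noncomputable def kirchhoffLoveTensor {n : Type*} (A : Matrix n n ℝ) (ν : ℝ) (α β γ δ : n) : ℝ :=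
  ν * A α β * A γ δ + (1 / 2 : ℝ) * (1 - ν) * (A α γ * A β δ + A α δ * A β γ)

section KirchhoffLove

variable {n : Type*} [Fintype n]

lemma sum_kirchhoffLoveTensor_mul_eq {A m : Matrix n n ℝ} (hA : A.IsSymm) (hm : m.IsSymm)
    (ν : ℝ) :
    ∑ α, ∑ β, ∑ γ, ∑ δ, kirchhoffLoveTensor A ν α β γ δ * m α β * m γ δ =
      isotropicForm ν (A * m) := by
  have h₁ : ∑ α, ∑ β, ∑ γ, ∑ δ, A α β * A γ δ * m α β * m γ δ = (A * m).trace ^ 2 := by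
    simp only [trace, diag_apply, mul_apply, sq, Finset.sum_mul, Finset.mul_sum]
    congr! 4 with i - j - k - l
    rw [hm.apply i j, hm.apply k l]; ring
  have h₂ : ∑ α, ∑ β, ∑ γ, ∑ δ, A α γ * A β δ * m α β * m γ δ = (A * m * A * m).trace := by
    simp only [trace, diag_apply, mul_apply, Finset.sum_mul]
    rw [Finset.sum_comm]
    congr! 4 with i - j - k - l
    rw [hA.apply j k, hm.apply k l]; ring
  have h₃ : ∑ α, ∑ β, ∑ γ, ∑ δ, A α δ * A β γ * m α β * m γ δ = (A * m * A * m).trace := by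
    simp only [trace, diag_apply, mul_apply, Finset.sum_mul]
    rw [Finset.sum_comm]
    congr! 2 with i - j
    rw [Finset.sum_comm]
    congr! 2 with k - l
    rw [hA.apply]; ring
  calc ∑ α, ∑ β, ∑ γ, ∑ δ, kirchhoffLoveTensor A ν α β γ δ * m α β * m γ δ
      = ν * ∑ α, ∑ β, ∑ γ, ∑ δ, A α β * A γ δ * m α β * m γ δ + (1 / 2 : ℝ) * (1 - ν) *
          (∑ α, ∑ β, ∑ γ, ∑ δ, A α γ * A β δ * m α β * m γ δ +
            ∑ α, ∑ β, ∑ γ, ∑ δ, A α δ * A β γ * m α β * m γ δ) := by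
        simp only [kirchhoffLoveTensor, Finset.mul_sum, ← Finset.sum_add_distrib]
        congr! 4; ring
    _ = isotropicForm ν (A * m) := by
        rw [h₁, h₂, h₃, isotropicForm, ← Matrix.mul_assoc (A * m)]; ring

lemma Matrix.PosDef.sum_kirchhoffLoveTensor_mul_pos [DecidableEq n] {A m : Matrix n n ℝ}
    (hA : A.PosDef) (hm : m.IsSymm) (hm0 : m ≠ 0) {ν : ℝ}
    (hν₁ : 0 < 1 + (Fintype.card n - 1) * ν) (hν₂ : ν < 1) :
    0 < ∑ α, ∑ β, ∑ γ, ∑ δ, kirchhoffLoveTensor A ν α β γ δ * m α β * m γ δ := by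
  rw [sum_kirchhoffLoveTensor_mul_eq (isHermitian_iff_isSymm.mp hA.isHermitian) hm]
  exact hA.isotropicForm_mul_pos hm hm0 hν₁ hν₂

end KirchhoffLove

/-- **Positive definiteness of the Kirchhoff–Love elasticity tensor.**
Let `A = (a^{αβ})` be a symmetric positive-definite real `2 × 2` matrix and `−1 < ν < 1`.
With `H^{αβγδ} = ν a^{αβ} a^{γδ} + (1/2)(1−ν)(a^{αγ} a^{βδ} + a^{αδ} a^{βγ})`, the
contraction `m : H : m = Σ H^{αβγδ} m_{αβ} m_{γδ}` is nonnegative on symmetric `2 × 2`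
matrices `m`, vanishing iff `m = 0`.  Consequently, the membrane and bending energy
densities `W^m(α) = (1/2)(E t/(1−ν²)) α:H:α` and `W^b(β) = (1/2)(E t³/(12(1−ν²))) β:H:β`
are strictly positive on nonzero symmetric strain tensors whenever `E > 0` and `t > 0`. -/
theorem elasticity_tensor_positive_definite
    (A : Matrix (Fin 2) (Fin 2) ℝ) (hA : A.PosDef)
    (ν : ℝ) (hν₁ : -1 < ν) (hν₂ : ν < 1)
    (H : Fin 2 → Fin 2 → Fin 2 → Fin 2 → ℝ)
    (hH : ∀ α β γ δ, H α β γ δ =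
      ν * A α β * A γ δ + (1 / 2 : ℝ) * (1 - ν) * (A α γ * A β δ + A α δ * A β γ)) :
    (∀ m : Matrix (Fin 2) (Fin 2) ℝ, m.IsSymm →
        0 ≤ ∑ α, ∑ β, ∑ γ, ∑ δ, H α β γ δ * m α β * m γ δ ∧
        ((∑ α, ∑ β, ∑ γ, ∑ δ, H α β γ δ * m α β * m γ δ) = 0 ↔ m = 0)) ∧
      (∀ E t : ℝ, 0 < E → 0 < t →
        ∀ m : Matrix (Fin 2) (Fin 2) ℝ, m.IsSymm → m ≠ 0 →
          0 < (1 / 2 : ℝ) * (E * t / (1 - ν ^ 2)) *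
              ∑ α, ∑ β, ∑ γ, ∑ δ, H α β γ δ * m α β * m γ δ ∧
          0 < (1 / 2 : ℝ) * (E * t ^ 3 / (12 * (1 - ν ^ 2))) *
              ∑ α, ∑ β, ∑ γ, ∑ δ, H α β γ δ * m α β * m γ δ) := by
  obtain rfl : H = kirchhoffLoveTensor A ν := funext fun α => funext fun β => funext fun γ =>
    funext fun δ => hH α β γ δ
  have hν : 0 < 1 + (Fintype.card (Fin 2) - 1 : ℝ) * ν := by norm_num; linarith
  have hpos (m : Matrix (Fin 2) (Fin 2) ℝ) (hm : m.IsSymm) (hm0 : m ≠ 0) :=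
    hA.sum_kirchhoffLoveTensor_mul_pos hm hm0 hν hν₂
  refine ⟨fun m hm => ?_, fun E t hE ht m hm hm0 => ?_⟩
  · rcases eq_or_ne m 0 with rfl | hm0
    · simp
    · exact ⟨(hpos m hm hm0).le, iff_of_false (hpos m hm hm0).ne' hm0⟩
  · have hQ := hpos m hm hm0
    have hν' : 0 < 1 - ν ^ 2 := by nlinarith
    exact ⟨mul_pos (by positivity) hQ, mul_pos (by positivity) hQ⟩
end
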